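/- arXiv:2202.11582 — 3 statements merged into one kernel-verified Lean document; each statement's English description precedes it below -/
import Mathlib

section
/- Let l ≥ 1 and let δ be a submodular function on subsets of [l] with values in ℤ such that δ([l]) ≥ 1, and let δ'(I) = min(δ(I), δ([l]) − 1) for I ≠ ∅ with δ'(∅) = 0. Then the truncation of the polymatroid 𝒫(δ), namely 𝒫(δ)_T = {α − e_j : α ∈ 𝒫(δ), j ∈ [l], α_j ≥ 1}, equals the polymatroid 𝒫(δ'); in particular, the truncation of a polymatroid is a polymatroid. -/
/-!
For `α = β + e_j` one has `β(I) ≤ α(I)` and `β(I) ≤ β([l]) = α([l]) - 1`, so every element of the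
truncation lies in `𝒫(δ')`. Conversely, let `β ∈ 𝒫(δ')`, so `β ∈ 𝒫(δ)`. By submodularity the
`δ`-tight sets of `β` (those with `β(I) = δ(I)`) are closed under union, so there is a largest one,
`T`. As `β([l]) ≤ δ([l]) - 1`, `T ≠ [l]`; for any `j ∉ T` no set containing `j` is tight, so
`β + e_j ∈ 𝒫(δ)`.
-/

open Finset

namespace Polymatroid

variable {ι : Type*}

def polymatroid (δ : Finset ι → ℤ) : Set (ι → ℕ) :=
  {α | ∀ I : Finset ι, ∑ i ∈ I, (α i : ℤ) ≤ δ I}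

variable [DecidableEq ι]

def truncation (P : Set (ι → ℕ)) : Set (ι → ℕ) :=
  {β | ∃ α ∈ P, ∃ j : ι, 1 ≤ α j ∧ ∀ i : ι, β i = α i - if i = j then 1 else 0}

def truncatedRank [Fintype ι] (δ : Finset ι → ℤ) (I : Finset ι) : ℤ :=
  if I = ∅ then 0 else min (δ I) (δ univ - 1)

theorem mem_truncation_iff {P : Set (ι → ℕ)} {β : ι → ℕ} :
    β ∈ truncation P ↔ ∃ j : ι, β + Pi.single j 1 ∈ P := by
  constructor
  · rintro ⟨α, hα, j, hj, hβ⟩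
    refine ⟨j, ?_⟩
    convert hα using 1
    ext i
    have := hβ i
    by_cases hij : i = j
    · subst hij; simp only [Pi.add_apply, Pi.single_eq_same, if_pos] at this ⊢; omega
    · simp_all
  · rintro ⟨j, hj⟩
    refine ⟨_, hj, j, by simp, fun i => ?_⟩
    by_cases hij : i = j
    · subst hij; simp
    · simp [hij]

theorem sum_add_single (β : ι → ℕ) (j : ι) (I : Finset ι) :
    ∑ i ∈ I, ((β + Pi.single j 1 : ι → ℕ) i : ℤ) =
      ∑ i ∈ I, (β i : ℤ) + if j ∈ I then 1 else 0 := by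
  simp only [Pi.add_apply, Nat.cast_add, sum_add_distrib, add_right_inj]
  simp [Pi.single_apply, eq_comm]

def tightSets (δ : Finset ι → ℤ) (β : ι → ℕ) : Set (Finset ι) :=
  {I | δ I ≤ ∑ i ∈ I, (β i : ℤ)}

variable {δ : Finset ι → ℤ} {β : ι → ℕ}

theorem supClosed_tightSets (hsub : ∀ I J : Finset ι, δ (I ∪ J) + δ (I ∩ J) ≤ δ I + δ J)
    (hβ : β ∈ polymatroid δ) : SupClosed (tightSets δ β) := by
  intro I hI J hJ
  have hinter := hβ (I ∩ J)
  have hsum := sum_union_inter (s₁ := I) (s₂ := J) (f := fun i => (β i : ℤ))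
  change δ (I ∪ J) ≤ ∑ i ∈ I ∪ J, (β i : ℤ)
  linarith [hsub I J, hI.out, hJ.out]

variable [Fintype ι]

theorem mem_polymatroid_truncatedRank {j : ι} (h : β + Pi.single j 1 ∈ polymatroid δ) :
    β ∈ polymatroid (truncatedRank δ) := by
  intro I
  have hle (J : Finset ι) : ∑ i ∈ J, (β i : ℤ) + (if j ∈ J then 1 else 0) ≤ δ J :=
    sum_add_single β j J ▸ h J
  unfold truncatedRank
  split_ifs with hI
  · simp [hI]
  · have hI : ∑ i ∈ I, (β i : ℤ) ≤ δ I := by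
      have := hle I
      split_ifs at this <;> linarith
    have hmono : ∑ i ∈ I, (β i : ℤ) ≤ ∑ i, (β i : ℤ) :=
      sum_le_sum_of_subset_of_nonneg (subset_univ I) fun _ _ _ => by positivity
    have huniv := hle univ
    simp only [mem_univ, if_true] at huniv
    exact le_min hI (by linarith)

theorem mem_polymatroid_of_mem_truncatedRank (hempty : δ ∅ = 0)
    (h : β ∈ polymatroid (truncatedRank δ)) : β ∈ polymatroid δ := by
  intro I
  have hI := h I
  unfold truncatedRank at hI
  split_ifs at hI with hI'
  · simp [hI', hempty]
  · exact hI.trans (min_le_left _ _)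

theorem exists_greatest_tightSets (hempty : δ ∅ = 0)
    (hsub : ∀ I J : Finset ι, δ (I ∪ J) + δ (I ∩ J) ≤ δ I + δ J) (hβ : β ∈ polymatroid δ) :
    ∃ T ∈ tightSets δ β, ∀ I ∈ tightSets δ β, I ⊆ T := by
  classical
  let tight := univ.filter (· ∈ tightSets δ β)
  have hempty_mem : ∅ ∈ tight := mem_filter.mpr ⟨mem_univ _, by simp [tightSets, hempty]⟩
  refine ⟨tight.sup id, (supClosed_tightSets hsub hβ).finsetSup_mem ⟨_, hempty_mem⟩ ?_, ?_⟩
  · intro I hI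
    exact (mem_filter.mp hI).2
  · intro I hI
    exact le_sup (f := id) (mem_filter.mpr ⟨mem_univ I, hI⟩)

theorem exists_add_single_mem_polymatroid (hempty : δ ∅ = 0)
    (hsub : ∀ I J : Finset ι, δ (I ∪ J) + δ (I ∩ J) ≤ δ I + δ J) (hβ : β ∈ polymatroid δ)
    (huniv : ∑ i, (β i : ℤ) < δ univ) : ∃ j : ι, β + Pi.single j 1 ∈ polymatroid δ := by
  obtain ⟨T, hT, hmax⟩ := exists_greatest_tightSets hempty hsub hβ
  obtain ⟨j, hjT⟩ : ∃ j, j ∉ T := by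
    by_contra! hall
    rw [eq_univ_of_forall hall] at hT
    exact huniv.not_ge hT
  refine ⟨j, fun I => ?_⟩
  rw [sum_add_single]
  split_ifs with hjI
  · have hI : I ∉ tightSets δ β := fun hI => hjT (hmax I hI hjI)
    have : ∑ i ∈ I, (β i : ℤ) < δ I := not_le.mp hI
    omega
  · simpa using hβ I

end Polymatroid

open Polymatroid in
theorem truncation_polymatroid_general (l : ℕ) (δ : Finset (Fin l) → ℤ)
    (hempty : δ ∅ = 0)
    (hsub : ∀ I J : Finset (Fin l), δ (I ∪ J) + δ (I ∩ J) ≤ δ I + δ J)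
    (h1 : 1 ≤ δ Finset.univ)
    (δ' : Finset (Fin l) → ℤ)
    (hδ' : ∀ I : Finset (Fin l),
      δ' I = if I = ∅ then 0 else min (δ I) (δ Finset.univ - 1)) :
    {β : Fin l → ℕ | ∃ α : Fin l → ℕ,
        (∀ I : Finset (Fin l), ∑ i ∈ I, (α i : ℤ) ≤ δ I) ∧
        ∃ j : Fin l, 1 ≤ α j ∧ ∀ i : Fin l, β i = α i - (if i = j then 1 else 0)} =
    {β : Fin l → ℕ | ∀ I : Finset (Fin l), ∑ i ∈ I, (β i : ℤ) ≤ δ' I} := by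
  obtain rfl : δ' = truncatedRank δ := funext hδ'
  change truncation (polymatroid δ) = polymatroid (truncatedRank δ)
  ext β
  rw [mem_truncation_iff]
  constructor
  · rintro ⟨j, hj⟩
    exact mem_polymatroid_truncatedRank hj
  · intro hβ
    refine exists_add_single_mem_polymatroid hempty hsub
      (mem_polymatroid_of_mem_truncatedRank hempty hβ) ?_
    have huniv : (univ : Finset (Fin l)) ≠ ∅ := fun h => by simp [h, hempty] at h1
    have := hβ univ
    simp only [truncatedRank, huniv, if_false] at this
    linarith [min_le_right (δ univ) (δ univ - 1)]

/-- The truncation `𝒫(δ)_T = {α − e_j : α ∈ 𝒫(δ), j ∈ [l], α_j ≥ 1}`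
of the polymatroid `𝒫(δ)` equals the polymatroid `𝒫(δ')` of the truncated
submodular function `δ'(I) = min(δ(I), δ([l]) − 1)` (for `I ≠ ∅`, `δ'(∅) = 0`). -/
theorem truncation_polymatroid (l : ℕ) (hl : 1 ≤ l) (δ : Finset (Fin l) → ℤ)
    (hempty : δ ∅ = 0)
    (hmono : ∀ I J : Finset (Fin l), I ⊆ J → δ I ≤ δ J)
    (hsub : ∀ I J : Finset (Fin l), δ (I ∪ J) + δ (I ∩ J) ≤ δ I + δ J)
    (h1 : 1 ≤ δ Finset.univ)
    (δ' : Finset (Fin l) → ℤ)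
    (hδ' : ∀ I : Finset (Fin l),
      δ' I = if I = ∅ then 0 else min (δ I) (δ Finset.univ - 1)) :
    {β : Fin l → ℕ | ∃ α : Fin l → ℕ,
        (∀ I : Finset (Fin l), ∑ i ∈ I, (α i : ℤ) ≤ δ I) ∧
        ∃ j : Fin l, 1 ≤ α j ∧ ∀ i : Fin l, β i = α i - (if i = j then 1 else 0)} =
    {β : Fin l → ℕ | ∀ I : Finset (Fin l), ∑ i ∈ I, (β i : ℤ) ≤ δ' I} :=
  truncation_polymatroid_general l δ hempty hsub h1 δ' hδ'
end

section
/- Let l ≥ 1, let δ be a submodular function on subsets of [l] with values in ℤ, and let α ∈ 𝒫(δ) satisfy Σ_{i∈[l]} α_i < δ([l]). Then there exists an index j ∈ [l] such that α + e_j ∈ 𝒫(δ), i.e. Σ_{i∈I} α_i + (1 if j ∈ I else 0) ≤ δ(I) for every I ⊆ [l]. -/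
/-!
If no tight set (one with `∑_{i ∈ I} α_i = δ I`) contained a given `j`, then `α + e_j` would stay
in `𝒫(δ)`. By submodularity the tight sets are closed under union, and `∅` is tight, so there is a
largest tight set `T`. Since `[l]` is not tight, some `j ∉ T` exists, and no tight set contains it.
-/

namespace Polymatroid

open Finset

variable {ι : Type*} [DecidableEq ι] {δ : Finset ι → ℤ} {x : ι → ℤ}

def IsTight (δ : Finset ι → ℤ) (x : ι → ℤ) (I : Finset ι) : Prop :=
  ∑ i ∈ I, x i = δ I

instance (δ : Finset ι → ℤ) (x : ι → ℤ) : DecidablePred (IsTight δ x) :=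
  fun I => inferInstanceAs (Decidable (∑ i ∈ I, x i = δ I))

theorem IsTight.union (hsub : ∀ I J : Finset ι, δ (I ∪ J) + δ (I ∩ J) ≤ δ I + δ J)
    (hx : ∀ I : Finset ι, ∑ i ∈ I, x i ≤ δ I) {I J : Finset ι}
    (hI : IsTight δ x I) (hJ : IsTight δ x J) : IsTight δ x (I ∪ J) := by
  have hsum : ∑ i ∈ I ∪ J, x i + ∑ i ∈ I ∩ J, x i = ∑ i ∈ I, x i + ∑ i ∈ J, x i :=
    sum_union_inter
  unfold IsTight at *
  linarith [hsub I J, hx (I ∪ J), hx (I ∩ J)]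

variable [Fintype ι]

def maxTightSet (δ : Finset ι → ℤ) (x : ι → ℤ) : Finset ι :=
  (univ.filter (IsTight δ x)).sup id

theorem subset_maxTightSet {I : Finset ι} (hI : IsTight δ x I) : I ⊆ maxTightSet δ x :=
  le_sup (f := id) (mem_filter.mpr ⟨mem_univ I, hI⟩)

theorem isTight_maxTightSet (hempty : δ ∅ = 0)
    (hsub : ∀ I J : Finset ι, δ (I ∪ J) + δ (I ∩ J) ≤ δ I + δ J)
    (hx : ∀ I : Finset ι, ∑ i ∈ I, x i ≤ δ I) : IsTight δ x (maxTightSet δ x) :=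
  sup_induction (p := IsTight δ x) (by simp [IsTight, hempty])
    (fun _ hI _ hJ => hI.union hsub hx hJ) (fun _ hI => (mem_filter.mp hI).2)

theorem exists_forall_sum_add_indicator_le (hempty : δ ∅ = 0)
    (hsub : ∀ I J : Finset ι, δ (I ∪ J) + δ (I ∩ J) ≤ δ I + δ J)
    (hx : ∀ I : Finset ι, ∑ i ∈ I, x i ≤ δ I) (hlt : ∑ i, x i < δ univ) :
    ∃ j, ∀ I : Finset ι, ∑ i ∈ I, x i + (if j ∈ I then 1 else 0) ≤ δ I := by
  have hT := isTight_maxTightSet hempty hsub hx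
  have hTne : maxTightSet δ x ≠ univ := by
    intro h
    rw [h, IsTight] at hT
    exact hlt.ne hT
  obtain ⟨j, -, hjT⟩ := exists_of_ssubset (ssubset_univ_iff.mpr hTne)
  refine ⟨j, fun I => ?_⟩
  by_cases hj : j ∈ I
  · have hslack : ∑ i ∈ I, x i ≠ δ I := fun hI => hjT (subset_maxTightSet hI hj)
    simpa [hj] using lt_of_le_of_ne (hx I) hslack
  · simpa [hj] using hx I

end Polymatroid

theorem polymatroid_augmentation_general (l : ℕ) (δ : Finset (Fin l) → ℤ)
    (hempty : δ ∅ = 0)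
    (hsub : ∀ I J : Finset (Fin l), δ (I ∪ J) + δ (I ∩ J) ≤ δ I + δ J)
    (α : Fin l → ℕ)
    (hα : ∀ I : Finset (Fin l), ∑ i ∈ I, (α i : ℤ) ≤ δ I)
    (hlt : ∑ i : Fin l, (α i : ℤ) < δ Finset.univ) :
    ∃ j : Fin l, ∀ I : Finset (Fin l),
      (∑ i ∈ I, (α i : ℤ)) + (if j ∈ I then 1 else 0) ≤ δ I :=
  Polymatroid.exists_forall_sum_add_indicator_le hempty hsub hα hlt

/-- If `α ∈ 𝒫(δ)` and `Σ_i α_i < δ([l])`, then `α + e_j ∈ 𝒫(δ)`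
for some index `j`. -/
theorem polymatroid_augmentation (l : ℕ) (hl : 1 ≤ l) (δ : Finset (Fin l) → ℤ)
    (hempty : δ ∅ = 0)
    (hmono : ∀ I J : Finset (Fin l), I ⊆ J → δ I ≤ δ J)
    (hsub : ∀ I J : Finset (Fin l), δ (I ∪ J) + δ (I ∩ J) ≤ δ I + δ J)
    (α : Fin l → ℕ)
    (hα : ∀ I : Finset (Fin l), ∑ i ∈ I, (α i : ℤ) ≤ δ I)
    (hlt : ∑ i : Fin l, (α i : ℤ) < δ Finset.univ) :
    ∃ j : Fin l, ∀ I : Finset (Fin l),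
      (∑ i ∈ I, (α i : ℤ)) + (if j ∈ I then 1 else 0) ≤ δ I :=
  polymatroid_augmentation_general l δ hempty hsub α hα hlt
end

section
/- Let l ≥ 1, let δ be a submodular function on subsets of [l] with values in ℤ, and let c ∈ ℕ^l satisfy Σ_{i∈I} c_i ≤ δ(I) + 1 for every I ⊆ [l] and Σ_{i∈[l]} c_i ≤ δ([l]). Then there exists an index j ∈ [l] such that for every I ⊆ [l] with j ∈ I one has Σ_{i∈I} c_i ≤ δ(I). -/
/-! The slack `f I = δ I + 1 - ∑_{i ∈ I} c_i` is nonnegative and submodular, so its zero sets (the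
tight sets) are closed under union: if `f I = f J = 0` then `f (I ∪ J) + f (I ∩ J) ≤ 0` forces both
terms to vanish. Hence there is a largest tight set `T`, which is not all of `[l]` because
`f [l] ≥ 1`. Any `j ∉ T` works, since a tight set containing `j` would lie inside `T`. -/

section Lattice

variable {β M : Type*} [AddCommMonoid M] [PartialOrder M] [IsOrderedAddMonoid M]

lemma supClosed_setOf_eq_zero [Lattice β] {f : β → M} (hf : ∀ b, 0 ≤ f b)
    (hsub : ∀ a b, f (a ⊔ b) + f (a ⊓ b) ≤ f a + f b) : SupClosed {b | f b = 0} := by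
  intro a ha b hb
  have hsum : f (a ⊔ b) + f (a ⊓ b) = 0 :=
    le_antisymm (by simpa [show f a = 0 from ha, show f b = 0 from hb] using hsub a b)
      (add_nonneg (hf _) (hf _))
  exact ((add_eq_zero_iff_of_nonneg (hf _) (hf _)).mp hsum).1

lemma SupClosed.exists_isGreatest [SemilatticeSup β] {s : Set β} (hs : SupClosed s)
    (hfin : s.Finite) (hne : s.Nonempty) : ∃ m, IsGreatest s m := by
  obtain ⟨m, hm⟩ := hfin.exists_maximal hne
  exact ⟨m, hm.prop, fun b hb => le_sup_right.trans (hm.le_of_ge (hs hm.prop hb) le_sup_left)⟩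

end Lattice

lemma Finset.exists_forall_mem_ne_zero_of_submodular {α M : Type*} [Fintype α] [DecidableEq α]
    [Nonempty α] [AddCommMonoid M] [PartialOrder M] [IsOrderedAddMonoid M]
    {f : Finset α → M} (hf : ∀ I, 0 ≤ f I)
    (hsub : ∀ I J, f (I ∪ J) + f (I ∩ J) ≤ f I + f J) (huniv : f univ ≠ 0) :
    ∃ j, ∀ I, j ∈ I → f I ≠ 0 := by
  by_cases hne : {I | f I = 0}.Nonempty
  · obtain ⟨T, hT, hmax⟩ :=
      (supClosed_setOf_eq_zero hf hsub).exists_isGreatest (Set.toFinite _) hne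
    obtain ⟨j, hj⟩ : ∃ j, j ∉ T := by
      by_contra! h
      exact huniv (eq_univ_iff_forall.mpr h ▸ hT)
    exact ⟨j, fun I hjI hI => hj (hmax hI hjI)⟩
  · exact ⟨Classical.arbitrary α, fun I _ hI => hne ⟨I, hI⟩⟩

theorem exists_good_index_general (l : ℕ) (hl : 1 ≤ l) (δ : Finset (Fin l) → ℤ)
    (hsub : ∀ I J : Finset (Fin l), δ (I ∪ J) + δ (I ∩ J) ≤ δ I + δ J)
    (c : Fin l → ℕ)
    (hc : ∀ I : Finset (Fin l), ∑ i ∈ I, (c i : ℤ) ≤ δ I + 1)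
    (htotal : ∑ i : Fin l, (c i : ℤ) ≤ δ Finset.univ) :
    ∃ j : Fin l, ∀ I : Finset (Fin l), j ∈ I → ∑ i ∈ I, (c i : ℤ) ≤ δ I := by
  have : Nonempty (Fin l) := ⟨⟨0, hl⟩⟩
  have hslack_submod (I J : Finset (Fin l)) :
      δ (I ∪ J) + 1 - ∑ i ∈ I ∪ J, (c i : ℤ) + (δ (I ∩ J) + 1 - ∑ i ∈ I ∩ J, (c i : ℤ)) ≤
        δ I + 1 - ∑ i ∈ I, (c i : ℤ) + (δ J + 1 - ∑ i ∈ J, (c i : ℤ)) := by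
    linarith [hsub I J, Finset.sum_union_inter (s₁ := I) (s₂ := J) (f := fun i => (c i : ℤ))]
  obtain ⟨j, hj⟩ := Finset.exists_forall_mem_ne_zero_of_submodular
    (fun I => sub_nonneg.mpr (hc I)) hslack_submod (by omega)
  refine ⟨j, fun I hjI => ?_⟩
  have := hj I hjI
  have := hc I
  omega

/-- If `Σ_{i∈I} c_i ≤ δ(I) + 1` for all `I` and
`Σ_{i∈[l]} c_i ≤ δ([l])`, then there is an index `j` such that every set
containing `j` satisfies the strict inequality `Σ_{i∈I} c_i ≤ δ(I)`. -/
theorem exists_good_index (l : ℕ) (hl : 1 ≤ l) (δ : Finset (Fin l) → ℤ)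
    (hempty : δ ∅ = 0)
    (hmono : ∀ I J : Finset (Fin l), I ⊆ J → δ I ≤ δ J)
    (hsub : ∀ I J : Finset (Fin l), δ (I ∪ J) + δ (I ∩ J) ≤ δ I + δ J)
    (c : Fin l → ℕ)
    (hc : ∀ I : Finset (Fin l), ∑ i ∈ I, (c i : ℤ) ≤ δ I + 1)
    (htotal : ∑ i : Fin l, (c i : ℤ) ≤ δ Finset.univ) :
    ∃ j : Fin l, ∀ I : Finset (Fin l), j ∈ I → ∑ i ∈ I, (c i : ℤ) ≤ δ I :=
  exists_good_index_general l hl δ hsub c hc htotal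
end
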